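/- arXiv:2201.10991 — 6 statements merged into one kernel-verified Lean document; each statement's English description precedes it below -/
import Mathlib

section
/- For a C-source M/G/1/1 queue with source-aware preemption, solving the linear system H(q_0)=1, H(q_{c'}) = p_{c'} E[e^{sη_{c'}}](H(q_0) + H(q'_0)) + p'_{c'} E[e^{sη'_{c'}}] H(q_{c'}) for all c', H(q'_0) = Σ_{c'≠c} p̄_{c'} E[e^{sη̄_{c'}}] H(q_{c'}), and H(q̄_0) = p̄_c E[e^{sη̄_c}] H(q_c), yields H(q̄_0) = (p_c E[e^{sη_c}] p̄_c E[e^{sη̄_c}]) / ((1 − p'_c E[e^{sη'_c}])(1 − Σ_{c'≠c} p_{c'} E[e^{sη_{c'}}] p̄_{c'} E[e^{sη̄_{c'}}]/(1 − p'_{c'} E[e^{sη'_{c'}}]))). -/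
open Finset

/-! Each equation for `H(q_{c'})` is an affine fixed point `x = u + d x`, so `H(q_{c'})` is
`a c' / (1 - d c')` times `1 + H(q'_0)`. Substituting into the equation for `H(q'_0)` makes
`1 + H(q'_0)` itself such a fixed point, with slope `Σ_{c' ≠ c} a c' b c' / (1 - d c')`. -/

theorem eq_div_one_sub_of_eq_add_mul_self {K : Type*} [Field K] {x u d : K} (hd : d ≠ 1)
    (h : x = u + d * x) : x = u / (1 - d) := by
  rw [eq_div_iff (sub_ne_zero.mpr hd.symm)]
  linear_combination h

/-- Solving the linear system of transfer functions for the semi-Markov chain of the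
source-aware preemptive policy. With `a c' = p_{c'} E[e^{sη_{c'}}]`,
`b c' = p̄_{c'} E[e^{sη̄_{c'}}]`, `d c' = p'_{c'} E[e^{sη'_{c'}}]`, the system
`H(q_0) = 1`, `H(q_{c'}) = a c' * (H(q_0) + H(q'_0)) + d c' * H(q_{c'})`,
`H(q'_0) = Σ_{c' ≠ c} b c' * H(q_{c'})`, `H(q̄_0) = b c * H(q_c)` yields the stated
closed form for `H(q̄_0)`. -/
theorem transfer_function_solution (C : ℕ) (c : Fin C) (a b d : Fin C → ℝ)
    (H0 H0' Hbar : ℝ) (Hq : Fin C → ℝ)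
    (hd : ∀ c', d c' ≠ 1)
    (hden : 1 - ∑ c' ∈ univ.erase c, a c' * b c' / (1 - d c') ≠ 0)
    (hH0 : H0 = 1)
    (hHq : ∀ c', Hq c' = a c' * (H0 + H0') + d c' * Hq c')
    (hH0' : H0' = ∑ c' ∈ univ.erase c, b c' * Hq c')
    (hHbar : Hbar = b c * Hq c) :
    Hbar = a c * b c /
      ((1 - d c) * (1 - ∑ c' ∈ univ.erase c, a c' * b c' / (1 - d c'))) := by
  subst hH0
  set S := ∑ c' ∈ univ.erase c, a c' * b c' / (1 - d c')
  have hHq_eq : ∀ c', Hq c' = a c' * (1 + H0') / (1 - d c') := fun c' =>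
    eq_div_one_sub_of_eq_add_mul_self (hd c') (hHq c')
  have hH0'_eq : H0' = S * (1 + H0') :=
    calc H0' = ∑ c' ∈ univ.erase c, b c' * Hq c' := hH0'
      _ = S * (1 + H0') := by
        rw [sum_mul]
        exact sum_congr rfl fun c' _ => by rw [hHq_eq c']; ring
  have hone_add_H0' : 1 + H0' = 1 / (1 - S) :=
    eq_div_one_sub_of_eq_add_mul_self (sub_ne_zero.mp hden).symm
      (by rw [← hH0'_eq])
  rw [hHbar, hHq_eq c, hone_add_H0']
  field_simp
end

section
/- In a multi-source M/G/1/1 queue under the source-aware preemptive policy, the MGF of the interdeparture time of source c is M̄_{Y_c}(s) = a_c M_S(s−λ_c) / ((1 − a'_c)(1 − Σ_{c'≠c} a_{c'} M_S(s−λ_{c'})/(1 − a'_{c'}))), where a_c = λ_c/(λ − s) and a'_c = λ_c(1 − M_S(s−λ_c))/(λ_c − s), obtained by substituting p_{c'} = λ_{c'}/λ, p̄_{c'} = L_{λ_{c'}}, p'_{c'} = 1 − L_{λ_{c'}}, E[e^{sη_{c'}}] = λ/(λ−s), E[e^{sη̄_{c'}}] = M_S(s−λ_{c'})/L_{λ_{c'}},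 E[e^{sη'_{c'}}] = λ_{c'}(1 − M_S(s−λ_{c'}))/((λ_{c'}−s)(1 − L_{λ_{c'}})) into the transfer-function formula of the semi-Markov chain. -/
open Finset

/-! The identity is a termwise cancellation: in every source's factor the routing probabilities
`p_{c'} = λ_{c'}/λ`, `p̄_{c'} = L_{λ_{c'}}` and `p'_{c'} = 1 - L_{λ_{c'}}` cancel against the
normalisations of the sojourn-time MGFs, leaving `a_{c'} M_S(s - λ_{c'})` and `a'_{c'}`. -/

lemma departure_term_eq {Λ L : ℝ} (hΛ : Λ ≠ 0) (hL : L ≠ 0) (a s M : ℝ) :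
    (a / Λ) * (Λ / (Λ - s)) * (L * (M / L)) = a / (Λ - s) * M := by
  rw [div_mul_div_cancel₀ hΛ, mul_div_cancel₀ M hL]

lemma one_sub_preemption_term_eq {L : ℝ} (hL : L ≠ 1) (x y : ℝ) :
    1 - (1 - L) * (x / (y * (1 - L))) = 1 - x / y := by
  rw [mul_div_left_comm, div_mul_cancel_right₀ (sub_ne_zero.mpr hL.symm), div_eq_mul_inv]

theorem mgf_interdeparture_source_aware_general (C : ℕ) (c : Fin C) (lam : Fin C → ℝ)
    (hlam : ∀ c', 0 < lam c') (MS : ℝ → ℝ) (s : ℝ)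
    (hLpos : ∀ c', 0 < MS (-(lam c'))) (hL1 : ∀ c', MS (-(lam c')) ≠ 1) :
    ((lam c / ∑ j, lam j) * ((∑ j, lam j) / (∑ j, lam j - s)) *
        (MS (-(lam c)) * (MS (s - lam c) / MS (-(lam c))))) /
      ((1 - (1 - MS (-(lam c))) *
          (lam c * (1 - MS (s - lam c)) / ((lam c - s) * (1 - MS (-(lam c)))))) *
        (1 - ∑ c' ∈ univ.erase c,
          ((lam c' / ∑ j, lam j) * ((∑ j, lam j) / (∑ j, lam j - s)) *
              (MS (-(lam c')) * (MS (s - lam c') / MS (-(lam c'))))) /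
            (1 - (1 - MS (-(lam c'))) *
              (lam c' * (1 - MS (s - lam c')) / ((lam c' - s) * (1 - MS (-(lam c')))))))) =
    ((lam c / (∑ j, lam j - s)) * MS (s - lam c)) /
      ((1 - lam c * (1 - MS (s - lam c)) / (lam c - s)) *
        (1 - ∑ c' ∈ univ.erase c,
          (lam c' / (∑ j, lam j - s)) * MS (s - lam c') /
            (1 - lam c' * (1 - MS (s - lam c')) / (lam c' - s)))) := by
  have hΛ : ∑ j, lam j ≠ 0 := (sum_pos (fun j _ => hlam j) ⟨c, mem_univ c⟩).ne'
  simp only [departure_term_eq hΛ (hLpos _).ne', one_sub_preemption_term_eq (hL1 _)]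

/-- Substituting `p_{c'} = λ_{c'}/λ`, `p̄_{c'} = L_{λ_{c'}}`, `p'_{c'} = 1 - L_{λ_{c'}}`,
`E[e^{sη_{c'}}] = λ/(λ-s)`, `E[e^{sη̄_{c'}}] = M_S(s-λ_{c'})/L_{λ_{c'}}`, and
`E[e^{sη'_{c'}}] = λ_{c'}(1 - M_S(s-λ_{c'}))/((λ_{c'}-s)(1 - L_{λ_{c'}}))` into the
transfer-function formula yields the MGF of the interdeparture time
`M̄_{Y_c}(s) = a_c M_S(s-λ_c) / ((1-a'_c)(1 - Σ_{c'≠c} a_{c'} M_S(s-λ_{c'})/(1-a'_{c'})))`,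
where `a_c = λ_c/(λ-s)` and `a'_c = λ_c(1 - M_S(s-λ_c))/(λ_c-s)`, and `L_{λ_c} = M_S(-λ_c)`. -/
theorem mgf_interdeparture_source_aware (C : ℕ) (c : Fin C) (lam : Fin C → ℝ)
    (hlam : ∀ c', 0 < lam c') (MS : ℝ → ℝ) (s : ℝ)
    (hsL : s < ∑ j, lam j) (hs : ∀ c', s < lam c')
    (hLpos : ∀ c', 0 < MS (-(lam c'))) (hL1 : ∀ c', MS (-(lam c')) ≠ 1)
    (hap : ∀ c', 1 - lam c' * (1 - MS (s - lam c')) / (lam c' - s) ≠ 0)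
    (hden : 1 - ∑ c' ∈ univ.erase c,
        (lam c' / (∑ j, lam j - s)) * MS (s - lam c') /
          (1 - lam c' * (1 - MS (s - lam c')) / (lam c' - s)) ≠ 0) :
    ((lam c / ∑ j, lam j) * ((∑ j, lam j) / (∑ j, lam j - s)) *
        (MS (-(lam c)) * (MS (s - lam c) / MS (-(lam c))))) /
      ((1 - (1 - MS (-(lam c))) *
          (lam c * (1 - MS (s - lam c)) / ((lam c - s) * (1 - MS (-(lam c)))))) *
        (1 - ∑ c' ∈ univ.erase c,
          ((lam c' / ∑ j, lam j) * ((∑ j, lam j) / (∑ j, lam j - s)) *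
              (MS (-(lam c')) * (MS (s - lam c') / MS (-(lam c'))))) /
            (1 - (1 - MS (-(lam c'))) *
              (lam c' * (1 - MS (s - lam c')) / ((lam c' - s) * (1 - MS (-(lam c')))))))) =
    ((lam c / (∑ j, lam j - s)) * MS (s - lam c)) /
      ((1 - lam c * (1 - MS (s - lam c)) / (lam c - s)) *
        (1 - ∑ c' ∈ univ.erase c,
          (lam c' / (∑ j, lam j - s)) * MS (s - lam c') /
            (1 - lam c' * (1 - MS (s - lam c')) / (lam c' - s)))) :=
  mgf_interdeparture_source_aware_general C c lam hlam MS s hLpos hL1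
end

section
/- For the two-source M/G/1/1 queue under the source-agnostic preemptive policy, the first derivative at s = 0 of M̂_{δ_1}(s) = λ_1 M_S(s−λ)/(λ_1 M_S(s−λ) − s) equals 1/(λ_1 L_λ), i.e., the average AoI of source 1 is Δ̂_1 = 1/(λ_1 L_λ). -/
open MeasureTheory Filter

/-! The derivative of `M_S` at `-λ` cancels in the quotient rule: for `g s = λ₁ M_S(s - λ)`,
`(g / (g - id))'(0) = (g'(0) g(0) - g(0) (g'(0) - 1)) / g(0)² = 1 / g(0)`. -/

theorem HasDerivAt.div_self_sub_id {𝕜 : Type*} [NontriviallyNormedField 𝕜] {g : 𝕜 → 𝕜}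
    {g' : 𝕜} (hg : HasDerivAt g g' 0) (hg0 : g 0 ≠ 0) :
    HasDerivAt (fun s => g s / (g s - s)) (1 / g 0) 0 := by
  have hden : HasDerivAt (fun s => g s - s) (g' - 1) 0 := hg.sub (hasDerivAt_id 0)
  refine (hg.div hden (by simpa using hg0)).congr_deriv ?_
  simp only [sub_zero]
  field_simp
  ring

theorem avg_aoi_source_agnostic_general (MS : ℝ → ℝ) (l1 lam : ℝ) (hl1 : 0 < l1)
    (hdiff : ∀ᶠ x in nhds (-lam), DifferentiableAt ℝ MS x)
    (hL : 0 < MS (-lam)) :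
    deriv (fun s => l1 * MS (s - lam) / (l1 * MS (s - lam) - s)) 0 =
      1 / (l1 * MS (-lam)) := by
  have hMS : HasDerivAt MS (deriv MS (-lam)) (0 - lam) := by
    simpa using hdiff.self_of_nhds.hasDerivAt
  have hg : HasDerivAt (fun s => l1 * MS (s - lam)) (l1 * (deriv MS (-lam) * 1)) 0 :=
    (hMS.comp 0 ((hasDerivAt_id 0).sub_const lam)).const_mul l1
  have hg0 : l1 * MS (0 - lam) ≠ 0 := by rw [zero_sub]; positivity
  simpa using (hg.div_self_sub_id hg0).deriv

/-- For the two-source M/G/1/1 queue under the source-agnostic preemptive policy, the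
derivative at `s = 0` of `M̂_{δ_1}(s) = λ_1 M_S(s-λ)/(λ_1 M_S(s-λ) - s)` equals
`1/(λ_1 L_λ)` with `L_λ = M_S(-λ)`: the average AoI of source 1 is `Δ̂_1 = 1/(λ_1 L_λ)`. -/
theorem avg_aoi_source_agnostic {Ω : Type*} [MeasurableSpace Ω] (μ : Measure Ω)
    [IsProbabilityMeasure μ] (S : Ω → ℝ) (hSnn : ∀ ω, 0 ≤ S ω)
    (MS : ℝ → ℝ) (hMS : ∀ r, MS r = ∫ ω, Real.exp (r * S ω) ∂μ)
    (l1 lam : ℝ) (hl1 : 0 < l1) (hlam : 0 < lam)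
    (hdiff : ∀ᶠ x in nhds (-lam), DifferentiableAt ℝ MS x)
    (hL : 0 < MS (-lam)) :
    deriv (fun s => l1 * MS (s - lam) / (l1 * MS (s - lam) - s)) 0 =
      1 / (l1 * MS (-lam)) :=
  avg_aoi_source_agnostic_general MS l1 lam hl1 hdiff hL
end

section
/- For the two-source M/G/1/1 queue under the source-agnostic preemptive policy, the average peak AoI of source 1, given as the derivative at s = 0 of M̂_{A_1}(s) = λ_1 M_S(s−λ)^2/(L_λ(λ_1 M_S(s−λ) − s)), equals (1 + λ_1 L'_λ)/(λ_1 L_λ), where L'_λ = E[S e^{-λS}] = M'_S(−λ). -/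
open MeasureTheory Filter

theorem hasDerivAt_mul_sq_div_mul_sub_id {f : ℝ → ℝ} {f' c L : ℝ} (hf : HasDerivAt f f' 0)
    (hf0 : f 0 = L) (hc : c ≠ 0) (hL : L ≠ 0) :
    HasDerivAt (fun s => c * f s ^ 2 / (L * (c * f s - s))) ((1 + c * f') / (c * L)) 0 := by
  have hnum : HasDerivAt (fun s => c * f s ^ 2) (c * (2 * f 0 * f')) 0 := by
    simpa using (hf.pow 2).const_mul c
  have hden : HasDerivAt (fun s => L * (c * f s - s)) (L * (c * f' - 1)) 0 :=
    ((hf.const_mul c).sub (hasDerivAt_id 0)).const_mul L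
  have hden0 : L * (c * f 0 - 0) ≠ 0 := by simp [hf0, hc, hL]
  refine (hnum.div hden hden0).congr_deriv ?_
  rw [hf0]
  field_simp
  ring

theorem avg_peak_aoi_source_agnostic_general
    (MS : ℝ → ℝ)
    (l1 lam : ℝ) (hl1 : 0 < l1)
    (hdiff : ∀ᶠ x in nhds (-lam), DifferentiableAt ℝ MS x)
    (hL : 0 < MS (-lam)) :
    deriv (fun s => l1 * MS (s - lam) ^ 2 / (MS (-lam) * (l1 * MS (s - lam) - s))) 0 =
      (1 + l1 * deriv MS (-lam)) / (l1 * MS (-lam)) := by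
  have hMS : HasDerivAt MS (deriv MS (-lam)) (0 - lam) := by
    rw [zero_sub]
    exact hdiff.self_of_nhds.hasDerivAt
  exact (hasDerivAt_mul_sq_div_mul_sub_id hMS.comp_sub_const (by rw [zero_sub])
    hl1.ne' hL.ne').deriv

/-- For the two-source M/G/1/1 queue under the source-agnostic preemptive policy, the
derivative at `s = 0` of `M̂_{A_1}(s) = λ_1 M_S(s-λ)²/(L_λ(λ_1 M_S(s-λ) - s))` equals
`(1 + λ_1 L'_λ)/(λ_1 L_λ)`, where `L_λ = M_S(-λ)` and `L'_λ = M'_S(-λ) = E[S e^{-λS}]`: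
the average peak AoI of source 1 is `Â_1 = (1 + λ_1 L'_λ)/(λ_1 L_λ)`. -/
theorem avg_peak_aoi_source_agnostic {Ω : Type*} [MeasurableSpace Ω] (μ : Measure Ω)
    [IsProbabilityMeasure μ] (S : Ω → ℝ) (hSnn : ∀ ω, 0 ≤ S ω)
    (MS : ℝ → ℝ) (hMS : ∀ r, MS r = ∫ ω, Real.exp (r * S ω) ∂μ)
    (l1 lam : ℝ) (hl1 : 0 < l1) (hlam : 0 < lam)
    (hdiff : ∀ᶠ x in nhds (-lam), DifferentiableAt ℝ MS x)
    (hL : 0 < MS (-lam)) :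
    deriv (fun s => l1 * MS (s - lam) ^ 2 / (MS (-lam) * (l1 * MS (s - lam) - s))) 0 =
      (1 + l1 * deriv MS (-lam)) / (l1 * MS (-lam)) :=
  avg_peak_aoi_source_agnostic_general MS l1 lam hl1 hdiff hL
end

section
/- For the two-source M/G/1/1 queue under the non-preemptive policy, the derivative at s = 0 of M̃_{A_1}(s) = λ_1 M_S(s)^2/(λ − s − λ_2 M_S(s)) equals (2λ_1 + λ_2 + μ)/(λ_1 μ), where μ = 1/E[S] and λ = λ_1 + λ_2; i.e., the average peak AoI is Ã_1 = (2λ_1 + λ_2 + μ)/(λ_1 μ). -/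
open Filter

theorem hasDerivAt_peak_aoi_transform_zero {l1 l2 m : ℝ} {MS : ℝ → ℝ} (hl1 : l1 ≠ 0)
    (hMS : HasDerivAt MS m 0) (hMS0 : MS 0 = 1) :
    HasDerivAt (fun s => l1 * MS s ^ 2 / ((l1 + l2) - s - l2 * MS s))
      ((2 * l1 * m + l2 * m + 1) / l1) 0 := by
  have hnum : HasDerivAt (fun s => l1 * MS s ^ 2) (l1 * (2 * MS 0 ^ 1 * m)) 0 :=
    (hMS.pow 2).const_mul l1
  have hden : HasDerivAt (fun s => (l1 + l2) - s - l2 * MS s) (0 - 1 - l2 * m) 0 :=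
    ((hasDerivAt_const 0 (l1 + l2)).sub (hasDerivAt_id 0)).sub (hMS.const_mul l2)
  have hden0 : (l1 + l2) - 0 - l2 * MS 0 = l1 := by rw [hMS0]; ring
  have hquot := hnum.fun_div hden (by rwa [hden0])
  rw [hden0, hMS0] at hquot
  exact hquot.congr_deriv (by field_simp; ring)

theorem avg_peak_aoi_non_preemptive_general (l1 l2 mu : ℝ) (MS : ℝ → ℝ)
    (hl1 : 0 < l1) (hmu : 0 < mu)
    (hdiff : ∀ᶠ x in nhds (0 : ℝ), DifferentiableAt ℝ MS x)
    (hMS0 : MS 0 = 1) (hMS0' : deriv MS 0 = 1 / mu) :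
    deriv (fun s => l1 * MS s ^ 2 / ((l1 + l2) - s - l2 * MS s)) 0 =
      (2 * l1 + l2 + mu) / (l1 * mu) := by
  have hMS : HasDerivAt MS (1 / mu) 0 := hMS0' ▸ hdiff.self_of_nhds.hasDerivAt
  rw [(hasDerivAt_peak_aoi_transform_zero hl1.ne' hMS hMS0).deriv]
  field_simp

/-- For the two-source M/G/1/1 queue under the non-preemptive policy, the derivative at
`s = 0` of `M̃_{A_1}(s) = λ_1 M_S(s)²/(λ - s - λ_2 M_S(s))`, with `λ = λ_1 + λ_2`,
`M_S(0) = 1` and `M'_S(0) = E[S] = 1/μ`, equals `(2λ_1 + λ_2 + μ)/(λ_1 μ)`: the average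
peak AoI is `Ã_1 = (2λ_1 + λ_2 + μ)/(λ_1 μ)`. -/
theorem avg_peak_aoi_non_preemptive (l1 l2 mu : ℝ) (MS : ℝ → ℝ)
    (hl1 : 0 < l1) (hl2 : 0 < l2) (hmu : 0 < mu)
    (hdiff : ∀ᶠ x in nhds (0 : ℝ), DifferentiableAt ℝ MS x)
    (hMS0 : MS 0 = 1) (hMS0' : deriv MS 0 = 1 / mu) :
    deriv (fun s => l1 * MS s ^ 2 / ((l1 + l2) - s - l2 * MS s)) 0 =
      (2 * l1 + l2 + mu) / (l1 * mu) :=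
  avg_peak_aoi_non_preemptive_general l1 l2 mu MS hl1 hmu hdiff hMS0 hMS0'
end

section
/- For the two-source M/G/1/1 queue under the non-preemptive policy, the derivative at s = 0 of M̃_{δ_1}(s) = λ_1 M_S(s)(s + λ(M_S(s) − 1)) / (s(λ/μ+1)(λ − s − λ_2 M_S(s))) (extended continuously at s = 0) equals (λ+μ)/(λ_1 μ) + λμ E[S²]/(2(λ+μ)); i.e., the average AoI is Δ̃_1 = (λ+μ)/(λ_1 μ) + λμ E[S²]/(2(λ+μ)). -/
/-!
Write the function as `N s / (s * g s)` with `N s = λ₁ M_S(s) (s + λ (M_S(s) - 1))`,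
which vanishes at `0`, and `g s = (λ/μ + 1)(λ - s - λ₂ M_S(s))`, with `g 0 = (λ/μ + 1) λ₁ ≠ 0`.
Away from `0` the quotient rule gives the derivative as `((s N' - N)/s² · g - (N/s) · g') / g²`.
Here `N s / s → N'(0)` and, by L'Hôpital, `(s N' - N)/s² → N''(0)/2`, so the limit only
involves `M_S(0)`, `M_S'(0)` and `M_S''(0)`.
-/

open Filter Topology

theorem tendsto_mul_deriv_sub_div_sq {N N' : ℝ → ℝ} {n2 : ℝ} (h0 : N 0 = 0)
    (hN : ∀ᶠ s in 𝓝 0, HasDerivAt N (N' s) s) (hN' : HasDerivAt N' n2 0) :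
    Tendsto (fun s => (s * N' s - N s) / s ^ 2) (𝓝[≠] 0) (𝓝 (n2 / 2)) := by
  have hslope : Tendsto (fun s => (N' s - N' 0) / s) (𝓝[≠] 0) (𝓝 n2) := by
    simpa [div_eq_inv_mul] using hN'.tendsto_slope_zero
  have htaylor : Tendsto (fun s => (N s - s * N' 0) / s ^ 2) (𝓝[≠] 0) (𝓝 (n2 / 2)) := by
    have hcont : ContinuousAt N 0 := hN.self_of_nhds.continuousAt
    refine HasDerivAt.lhopital_zero_nhdsNE (f' := fun s => N' s - N' 0) (g' := fun s => 2 * s)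
      ?_ ?_ ?_ ?_ ?_ ?_
    · filter_upwards [hN.filter_mono nhdsWithin_le_nhds] with s hs
      exact hs.sub (hasDerivAt_mul_const (N' 0))
    · exact Eventually.of_forall fun s => by simpa using hasDerivAt_pow 2 s
    · filter_upwards [self_mem_nhdsWithin] with s hs
      exact mul_ne_zero two_ne_zero hs
    · have : ContinuousAt (fun s => N s - s * N' 0) 0 := by fun_prop
      simpa [h0] using this.tendsto.mono_left nhdsWithin_le_nhds
    · have : ContinuousAt (fun s : ℝ => s ^ 2) 0 := by fun_prop
      simpa using this.tendsto.mono_left nhdsWithin_le_nhds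
    · simpa [div_mul_eq_div_div_swap] using hslope.div_const 2
  -- `(s N' - N)/s² = (N' - N'(0))/s - (N - s N'(0))/s²`
  rw [show n2 / 2 = n2 - n2 / 2 by ring]
  refine (hslope.sub htaylor).congr' ?_
  filter_upwards [self_mem_nhdsWithin] with s (hs : s ≠ 0)
  field_simp
  ring

theorem tendsto_deriv_div_id_mul {N N' g g' : ℝ → ℝ} {n2 : ℝ} (h0 : N 0 = 0)
    (hN : ∀ᶠ s in 𝓝 0, HasDerivAt N (N' s) s) (hN' : HasDerivAt N' n2 0)
    (hg : ∀ᶠ s in 𝓝 0, HasDerivAt g (g' s) s) (hg' : ContinuousAt g' 0) (hg0 : g 0 ≠ 0) :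
    Tendsto (deriv fun s => N s / (s * g s)) (𝓝[≠] 0)
      (𝓝 ((n2 / 2 * g 0 - N' 0 * g' 0) / g 0 ^ 2)) := by
  have hgc : Tendsto g (𝓝[≠] 0) (𝓝 (g 0)) :=
    hg.self_of_nhds.continuousAt.tendsto.mono_left nhdsWithin_le_nhds
  have hslope : Tendsto (fun s => N s / s) (𝓝[≠] 0) (𝓝 (N' 0)) := by
    simpa [h0, div_eq_inv_mul] using hN.self_of_nhds.tendsto_slope_zero
  have hlim := (((tendsto_mul_deriv_sub_div_sq h0 hN hN').mul hgc).sub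
    (hslope.mul (hg'.tendsto.mono_left nhdsWithin_le_nhds))).div (hgc.pow 2) (pow_ne_zero 2 hg0)
  refine hlim.congr' ?_
  have hg_ne : ∀ᶠ s in 𝓝[≠] 0, g s ≠ 0 := hgc.eventually_ne hg0
  filter_upwards [hN.filter_mono nhdsWithin_le_nhds, hg.filter_mono nhdsWithin_le_nhds, hg_ne,
    self_mem_nhdsWithin] with s hNs hgs hgs0 (hs : s ≠ 0)
  have hd : HasDerivAt (fun s => N s / (s * g s)) _ s :=
    hNs.div ((hasDerivAt_id' s).mul hgs) (mul_ne_zero hs hgs0)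
  rw [hd.deriv, Pi.div_apply]
  field_simp
  ring

section MGF

variable {M M' : ℝ → ℝ} (c l : ℝ)

theorem hasDerivAt_mgf_numerator {s : ℝ} (hM : HasDerivAt M (M' s) s) :
    HasDerivAt (fun x => c * M x * (x + l * (M x - 1)))
      (c * (M' s * (s + l * (M s - 1)) + M s * (1 + l * M' s))) s :=
  ((hM.const_mul c).mul ((hasDerivAt_id' s).add ((hM.sub_const 1).const_mul l))).congr_deriv
    (by simp only [Pi.add_apply]; ring)

theorem hasDerivAt_mgf_numerator_deriv {m1 m2 : ℝ} (hM : HasDerivAt M m1 0)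
    (hM' : HasDerivAt M' m2 0) (h0 : M 0 = 1) (h0' : M' 0 = m1) :
    HasDerivAt (fun x => c * (M' x * (x + l * (M x - 1)) + M x * (1 + l * M' x)))
      (c * (2 * m1 * (1 + l * m1) + l * m2)) 0 :=
  (((hM'.mul ((hasDerivAt_id' 0).add ((hM.sub_const 1).const_mul l))).add
    (hM.mul ((hM'.const_mul l).const_add 1))).const_mul c).congr_deriv
    (by simp only [Pi.add_apply, h0, h0']; ring)

end MGF

/-- For the two-source M/G/1/1 queue under the non-preemptive policy, the derivative of
`M̃_{δ_1}(s) = λ_1 M_S(s)(s + λ(M_S(s) - 1)) / (s(λ/μ+1)(λ - s - λ_2 M_S(s)))`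
(with `λ = λ_1 + λ_2`) tends, as `s → 0`, to
`(λ+μ)/(λ_1 μ) + λ μ E[S²]/(2(λ+μ))`: the average AoI is
`Δ̃_1 = (λ+μ)/(λ_1 μ) + λ μ E[S²]/(2(λ+μ))`, where `M_S(0) = 1`, `M'_S(0) = 1/μ`,
and `M''_S(0) = E[S²]`. -/
theorem avg_aoi_non_preemptive (l1 l2 mu ES2 : ℝ) (MS : ℝ → ℝ)
    (hl1 : 0 < l1) (hl2 : 0 < l2) (hmu : 0 < mu)
    (hdiff : ∀ᶠ x in nhds (0 : ℝ), DifferentiableAt ℝ MS x)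
    (hdiff2 : DifferentiableAt ℝ (deriv MS) 0)
    (hMS0 : MS 0 = 1) (hMS0' : deriv MS 0 = 1 / mu) (hMS0'' : deriv (deriv MS) 0 = ES2) :
    Tendsto
      (deriv (fun s =>
        l1 * MS s * (s + (l1 + l2) * (MS s - 1)) /
          (s * ((l1 + l2) / mu + 1) * ((l1 + l2) - s - l2 * MS s))))
      (nhdsWithin 0 {0}ᶜ)
      (nhds ((l1 + l2 + mu) / (l1 * mu) + (l1 + l2) * mu * ES2 / (2 * (l1 + l2 + mu)))) := by
  have hM : ∀ᶠ s in 𝓝 0, HasDerivAt MS (deriv MS s) s := hdiff.mono fun s hs => hs.hasDerivAt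
  have hM0 : HasDerivAt MS (1 / mu) 0 := hMS0' ▸ hM.self_of_nhds
  have hM'0 : HasDerivAt (deriv MS) ES2 0 := hMS0'' ▸ hdiff2.hasDerivAt
  have hg : ∀ᶠ s in 𝓝 0,
      HasDerivAt (fun x => ((l1 + l2) / mu + 1) * (l1 + l2 - x - l2 * MS x))
        (((l1 + l2) / mu + 1) * (-1 - l2 * deriv MS s)) s := hM.mono fun s hs =>
    ((((hasDerivAt_const s _).sub (hasDerivAt_id' s)).sub (hs.const_mul l2)).const_mul
      _).congr_deriv (by ring)
  have hg0 : ((l1 + l2) / mu + 1) * (l1 + l2 - 0 - l2 * MS 0) ≠ 0 := by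
    rw [hMS0, show l1 + l2 - 0 - l2 * 1 = l1 by ring]
    positivity
  have hlim := tendsto_deriv_div_id_mul (by simp [hMS0])
    (hM.mono fun s => hasDerivAt_mgf_numerator l1 (l1 + l2))
    (hasDerivAt_mgf_numerator_deriv l1 (l1 + l2) hM0 hM'0 hMS0 hMS0') hg
    (by have := hdiff2.continuousAt; fun_prop) hg0
  simp_rw [mul_assoc _ ((l1 + l2) / mu + 1)]
  convert hlim using 2
  simp only [hMS0, hMS0']
  field_simp [hl1.ne']
  ring
end
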